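/- arXiv:1203.3603 — 3 statements merged into one kernel-verified Lean document; each statement's English description precedes it below -/
import Mathlib

section
/- Let A be an invertible positive operator on a Hilbert space H with spectrum contained in [λ₁, λ₂], where 0 < λ₁ < λ₂ and λ₁, λ₂ ∈ σ(A). Then for every ε > 0 sufficiently small there exists a rank-one orthogonal projection P on H such that ‖A P A^{-1}‖ > (1/(2√2))·(λ₂/λ₁) − ε. -/
/-!
Because `A` is self-adjoint, its spectral values `λ₁`, `λ₂` have approximate unit eigenvectors
`f`, `g`, and these are almost orthogonal since `λ₁ ≠ λ₂`. For the projection `P` onto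
`e = (f + g) / ‖f + g‖` we have `A P A⁻¹ (A f) = ⟪e, f⟫ A e`, hence
`‖A P A⁻¹‖ ≥ |⟪e, f⟫| ‖A e‖ / ‖A f‖ ≈ (1/√2) (λ₂/√2) / λ₁ = λ₂ / (2 λ₁)`,
which exceeds `λ₂ / (2√2 λ₁)` with room to spare.
-/

open scoped InnerProductSpace

section

open ContinuousLinearMap InnerProductSpace

variable {𝕜 E : Type*} [RCLike 𝕜] [NormedAddCommGroup E] [InnerProductSpace 𝕜 E]

theorem IsSelfAdjoint.isUnit_of_antilipschitz [CompleteSpace E] {T : E →L[𝕜] E}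
    (hT : IsSelfAdjoint T) {c : NNReal} (hc : AntilipschitzWith c T) : IsUnit T := by
  rw [isUnit_iff_bijective, bijective_iff_dense_range_and_antilipschitz,
    Submodule.topologicalClosure_eq_top_iff, hT.isStarNormal.orthogonal_range,
    LinearMap.ker_eq_bot]
  exact ⟨hc.injective, c, hc⟩

theorem IsSelfAdjoint.exists_norm_sub_smul_lt_of_mem_spectrum [CompleteSpace E]
    {T : E →L[𝕜] E} (hT : IsSelfAdjoint T) {μ : ℝ} (hμ : (μ : 𝕜) ∈ spectrum 𝕜 T)
    {η : ℝ} (hη : 0 < η) : ∃ x : E, ‖x‖ = 1 ∧ ‖T x - (μ : 𝕜) • x‖ < η := by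
  by_contra! h
  have hS : IsSelfAdjoint (algebraMap 𝕜 (E →L[𝕜] E) μ - T) :=
    (IsSelfAdjoint.algebraMap _ (RCLike.conj_ofReal μ)).sub hT
  refine spectrum.mem_iff.mp hμ (hS.isUnit_of_antilipschitz (c := η⁻¹.toNNReal) ?_)
  refine antilipschitz_of_bound _ fun x ↦ ?_
  rcases eq_or_ne x 0 with rfl | hx
  · simp
  have hx' : 0 < ‖x‖ := norm_pos_iff.mpr hx
  have key := h _ (norm_smul_inv_norm (𝕜 := 𝕜) hx)
  rw [map_smul, smul_comm (μ : 𝕜), ← smul_sub, norm_smul, norm_inv, RCLike.norm_ofReal,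
    abs_norm, ← div_eq_inv_mul, le_div_iff₀ hx', norm_sub_rev] at key
  rw [Real.coe_toNNReal _ (by positivity), sub_apply, ContinuousLinearMap.algebraMap_apply,
    inv_mul_eq_div, le_div_iff₀ hη, mul_comm]
  exact key

theorem LinearMap.IsSymmetric.abs_sub_mul_norm_inner_le {T : E →ₗ[𝕜] E} (hT : T.IsSymmetric)
    (a b : ℝ) (x y : E) :
    |a - b| * ‖⟪x, y⟫_𝕜‖ ≤ ‖x‖ * ‖T y - (b : 𝕜) • y‖ + ‖T x - (a : 𝕜) • x‖ * ‖y‖ := by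
  have hdiff : ((a - b : ℝ) : 𝕜) * ⟪x, y⟫_𝕜
      = ⟪x, T y - (b : 𝕜) • y⟫_𝕜 - ⟪T x - (a : 𝕜) • x, y⟫_𝕜 := by
    rw [inner_sub_right, inner_sub_left, inner_smul_right, inner_smul_left, RCLike.conj_ofReal,
      hT x y]
    push_cast
    ring
  calc |a - b| * ‖⟪x, y⟫_𝕜‖ = ‖⟪x, T y - (b : 𝕜) • y⟫_𝕜 - ⟪T x - (a : 𝕜) • x, y⟫_𝕜‖ := by
        rw [← hdiff, norm_mul, RCLike.norm_ofReal]
    _ ≤ _ := (norm_sub_le _ _).trans (add_le_add (norm_inner_le_norm _ _) (norm_inner_le_norm _ _))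

theorem LinearMap.IsSymmetric.abs_mul_norm_inner_sub_le_norm_apply {T : E →ₗ[𝕜] E}
    (hT : T.IsSymmetric) {x : E} (hx : ‖x‖ = 1) (a : ℝ) (y : E) :
    |a| * ‖⟪x, y⟫_𝕜‖ - ‖T x - (a : 𝕜) • x‖ * ‖y‖ ≤ ‖T y‖ := by
  have hsplit : ⟪T x, y⟫_𝕜 = (a : 𝕜) * ⟪x, y⟫_𝕜 + ⟪T x - (a : 𝕜) • x, y⟫_𝕜 := by
    rw [inner_sub_left, inner_smul_left, RCLike.conj_ofReal]
    ring
  calc |a| * ‖⟪x, y⟫_𝕜‖ - ‖T x - (a : 𝕜) • x‖ * ‖y‖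
      ≤ ‖(a : 𝕜) * ⟪x, y⟫_𝕜‖ - ‖⟪T x - (a : 𝕜) • x, y⟫_𝕜‖ := by
        rw [norm_mul, RCLike.norm_ofReal]
        gcongr
        exact norm_inner_le_norm _ _
    _ ≤ ‖⟪T x, y⟫_𝕜‖ := hsplit ▸ norm_sub_le_norm_add _ _
    _ = ‖⟪x, T y⟫_𝕜‖ := by rw [hT x y]
    _ ≤ ‖T y‖ := by simpa [hx] using norm_inner_le_norm (𝕜 := 𝕜) x (T y)

theorem one_sub_norm_inner_le_norm_inner_add {x : E} (hx : ‖x‖ = 1) (y : E) :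
    1 - ‖⟪x, y⟫_𝕜‖ ≤ ‖⟪x, x + y⟫_𝕜‖ := by
  have hxx : ‖⟪x, x⟫_𝕜‖ = 1 := by rw [inner_self_eq_norm_sq_to_K, hx]; simp
  rw [inner_add_right, ← hxx]
  exact norm_sub_le_norm_add _ _

theorem norm_add_sq_le_of_norm_eq_one {x y : E} (hx : ‖x‖ = 1) (hy : ‖y‖ = 1) :
    ‖x + y‖ ^ 2 ≤ 2 + 2 * ‖⟪x, y⟫_𝕜‖ := by
  rw [norm_add_sq (𝕜 := 𝕜), hx, hy]
  linarith [RCLike.re_le_norm ⟪x, y⟫_𝕜]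

theorem norm_inner_mul_norm_le_norm_comp_rankOne_comp {A B : E →L[𝕜] E} (hBA : B ∘L A = 1)
    (e x : E) : ‖⟪e, x⟫_𝕜‖ * ‖A e‖ ≤ ‖A ∘L rankOne 𝕜 e e ∘L B‖ * ‖A x‖ := by
  have h : (A ∘L rankOne 𝕜 e e ∘L B) (A x) = ⟪e, x⟫_𝕜 • A e := by
    simp [← comp_apply B A, hBA]
  simpa [h, norm_smul] using (A ∘L rankOne 𝕜 e e ∘L B).le_opNorm (A x)

theorem exists_le_norm_comp_rankOne_comp {A B : E →L[𝕜] E} (hA : (A : E →ₗ[𝕜] E).IsSymmetric)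
    (hBA : B ∘L A = 1) {l₁ l₂ : ℝ} (hl₁ : 0 < l₁) (hl : l₁ ≤ l₂) {f g : E} (hf : ‖f‖ = 1)
    (hg : ‖g‖ = 1) (hAf : ‖A f - (l₁ : 𝕜) • f‖ ≤ l₁ / 50) (hAg : ‖A g - (l₂ : 𝕜) • g‖ ≤ l₁ / 50)
    (hfg : ‖⟪f, g⟫_𝕜‖ ≤ 1 / 50) :
    ∃ e : E, ‖e‖ = 1 ∧ 2 / 5 * (l₂ / l₁) ≤ ‖A ∘L rankOne 𝕜 e e ∘L B‖ := by
  have hvf : 49 / 50 ≤ ‖⟪f + g, f⟫_𝕜‖ := by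
    rw [norm_inner_symm]
    linarith [one_sub_norm_inner_le_norm_inner_add (𝕜 := 𝕜) hf g]
  have hgv : 49 / 50 ≤ ‖⟪g, f + g⟫_𝕜‖ := by
    rw [add_comm f g]
    linarith [one_sub_norm_inner_le_norm_inner_add (𝕜 := 𝕜) hg f, norm_inner_symm (𝕜 := 𝕜) g f]
  set v := f + g
  have hv : ‖v‖ ≤ 2 := (norm_add_le f g).trans (by rw [hf, hg]; norm_num)
  have hv2 : ‖v‖ ^ 2 ≤ 51 / 25 := by linarith [norm_add_sq_le_of_norm_eq_one (𝕜 := 𝕜) hf hg]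
  have hAf' : ‖A f‖ ≤ 51 / 50 * l₁ :=
    calc ‖A f‖ = ‖(l₁ : 𝕜) • f + (A f - (l₁ : 𝕜) • f)‖ := by rw [add_sub_cancel]
      _ ≤ l₁ + l₁ / 50 := by
        grw [norm_add_le, norm_smul, RCLike.norm_ofReal, hf, abs_of_pos hl₁, hAf, mul_one]
      _ = 51 / 50 * l₁ := by ring
  have hl₂ : 0 < l₂ := hl₁.trans_le hl
  have hAv : 47 / 50 * l₂ ≤ ‖A v‖ :=
    calc 47 / 50 * l₂ ≤ |l₂| * (49 / 50) - l₁ / 50 * 2 := by rw [abs_of_pos hl₂]; linarith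
      _ ≤ |l₂| * ‖⟪g, v⟫_𝕜‖ - ‖A g - (l₂ : 𝕜) • g‖ * ‖v‖ := by gcongr
      _ ≤ ‖A v‖ := hA.abs_mul_norm_inner_sub_le_norm_apply hg l₂ v
  have hv0 : v ≠ 0 := fun h ↦ by
    rw [h, inner_zero_left, norm_zero] at hvf
    norm_num at hvf
  have hv0' : ‖v‖ ≠ 0 := norm_ne_zero_iff.mpr hv0
  refine ⟨(‖v‖⁻¹ : 𝕜) • v, norm_smul_inv_norm hv0, ?_⟩
  set N := ‖A ∘L rankOne 𝕜 ((‖v‖⁻¹ : 𝕜) • v) ((‖v‖⁻¹ : 𝕜) • v) ∘L B‖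
  have key := norm_inner_mul_norm_le_norm_comp_rankOne_comp hBA ((‖v‖⁻¹ : 𝕜) • v) f
  rw [inner_smul_left, map_smul, norm_smul, norm_mul, RCLike.norm_conj, norm_inv,
    RCLike.norm_ofReal, abs_norm] at key
  have h1 : 49 / 50 * (47 / 50 * l₂) ≤ N * ‖A f‖ * ‖v‖ ^ 2 := by
    calc 49 / 50 * (47 / 50 * l₂) ≤ ‖⟪v, f⟫_𝕜‖ * ‖A v‖ := by gcongr
      _ = ‖v‖⁻¹ * ‖⟪v, f⟫_𝕜‖ * (‖v‖⁻¹ * ‖A v‖) * ‖v‖ ^ 2 := by field_simp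
      _ ≤ N * ‖A f‖ * ‖v‖ ^ 2 := by gcongr
  have h2 : N * ‖A f‖ * ‖v‖ ^ 2 ≤ N * (51 / 50 * l₁) * (51 / 25) := by gcongr
  rw [mul_div_assoc', div_le_iff₀ hl₁]
  -- `(49/50 * 47/50) / (51/25 * 51/50) = 2303/5202 > 2/5`
  linarith

end

theorem one_div_two_mul_sqrt_two_lt : 1 / (2 * √2) < 2 / 5 := by
  rw [div_lt_div_iff₀ (by positivity) (by norm_num)]
  nlinarith [Real.sq_sqrt (show (0 : ℝ) ≤ 2 by norm_num), Real.sqrt_nonneg 2]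

theorem stmt9_general {H : Type*} [NormedAddCommGroup H] [InnerProductSpace ℂ H]
    [CompleteSpace H] (A B : H →L[ℂ] H) (lam₁ lam₂ : ℝ)
    (hA_pos : A.IsPositive)
    (hBA : B ∘L A = 1)
    (hlam : 0 < lam₁ ∧ lam₁ < lam₂)
    (h₁ : (lam₁ : ℂ) ∈ spectrum ℂ A) (h₂ : (lam₂ : ℂ) ∈ spectrum ℂ A) :
    ∃ ε₀ > 0, ∀ ε : ℝ, 0 < ε → ε < ε₀ →
      ∃ (P : H →L[ℂ] H) (e : H), ‖e‖ = 1 ∧ (∀ x : H, P x = ⟪e, x⟫_ℂ • e) ∧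
        1 / (2 * Real.sqrt 2) * (lam₂ / lam₁) - ε < ‖A ∘L P ∘L B‖ := by
  obtain ⟨hl₁, hl⟩ := hlam
  have hA := hA_pos.isSelfAdjoint
  set η := min (lam₁ / 50) ((lam₂ - lam₁) / 100)
  have hη : 0 < η := lt_min (by positivity) (by linarith)
  obtain ⟨f, hf, hAf⟩ := hA.exists_norm_sub_smul_lt_of_mem_spectrum h₁ hη
  obtain ⟨g, hg, hAg⟩ := hA.exists_norm_sub_smul_lt_of_mem_spectrum h₂ hη
  have hfg : ‖⟪f, g⟫_ℂ‖ ≤ 1 / 50 := by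
    have h := hA.isSymmetric.abs_sub_mul_norm_inner_le lam₁ lam₂ f g
    rw [hf, hg, ContinuousLinearMap.coe_coe, abs_sub_comm, abs_of_pos (sub_pos.mpr hl)] at h
    have : (lam₂ - lam₁) * ‖⟪f, g⟫_ℂ‖ ≤ (lam₂ - lam₁) * (1 / 50) := by
      linarith [min_le_right (lam₁ / 50) ((lam₂ - lam₁) / 100)]
    exact le_of_mul_le_mul_left this (sub_pos.mpr hl)
  obtain ⟨e, he, hbound⟩ := exists_le_norm_comp_rankOne_comp hA.isSymmetric hBA hl₁ hl.le hf hg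
    (hAf.le.trans (min_le_left _ _)) (hAg.le.trans (min_le_left _ _)) hfg
  refine ⟨1, one_pos, fun ε hε _ ↦ ⟨InnerProductSpace.rankOne ℂ e e, e, he, fun x ↦ rfl, ?_⟩⟩
  calc _ < 1 / (2 * √2) * (lam₂ / lam₁) := sub_lt_self _ hε
    _ ≤ 2 / 5 * (lam₂ / lam₁) :=
      mul_le_mul_of_nonneg_right one_div_two_mul_sqrt_two_lt.le (div_pos (hl₁.trans hl) hl₁).le
    _ ≤ _ := hbound

/-- For an invertible positive operator with spectrum in `[λ₁, λ₂]` attaining the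
endpoints, there are rank-one orthogonal projections `P` with
`‖A P A⁻¹‖ > λ₂/(2√2 λ₁) − ε`. -/
theorem stmt9 {H : Type*} [NormedAddCommGroup H] [InnerProductSpace ℂ H]
    [CompleteSpace H] (A B : H →L[ℂ] H) (lam₁ lam₂ : ℝ)
    (hA_pos : A.IsPositive)
    (hAB : A ∘L B = 1) (hBA : B ∘L A = 1)
    (hlam : 0 < lam₁ ∧ lam₁ < lam₂)
    (hspec : spectrum ℂ A ⊆ (fun t : ℝ => (t : ℂ)) '' Set.Icc lam₁ lam₂)
    (h₁ : (lam₁ : ℂ) ∈ spectrum ℂ A) (h₂ : (lam₂ : ℂ) ∈ spectrum ℂ A) :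
    ∃ ε₀ > 0, ∀ ε : ℝ, 0 < ε → ε < ε₀ →
      ∃ (P : H →L[ℂ] H) (e : H), ‖e‖ = 1 ∧ (∀ x : H, P x = ⟪e, x⟫_ℂ • e) ∧
        1 / (2 * Real.sqrt 2) * (lam₂ / lam₁) - ε < ‖A ∘L P ∘L B‖ :=
  stmt9_general A B lam₁ lam₂ hA_pos hBA hlam h₁ h₂
end

section
/- Conversely, if (f_n) is a sequence in H satisfying c (Σ |a_n|²)^{1/2} ≤ ‖Σ a_n f_n‖ ≤ C (Σ |a_n|²)^{1/2} for all finitely supported sequences (a_n) with constants 0 < c ≤ C, and the closed linear span of (f_n) is H, then there exists a bounded invertible operator T on H and an orthonormal basis (e_n) such that f_n = T e_n for all n. -/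
open Filter Topology

/-!
The two-sided ℓ² inequality says that the synthesis operator `x ↦ ∑ xₙ fₙ` is a well-defined
bounded map `ℓ² → H` that is bounded below. Bounded below gives a closed range, which contains
the dense span of `(fₙ)`, so the synthesis operator is an isomorphism `ℓ² ≃ H` sending the standard basis to `(fₙ)`. Composing it with the
coordinate isometry `H ≃ ℓ²` of any Hilbert basis `(eₙ)` gives `T` with `T eₙ = fₙ`; such a
Hilbert basis exists by Gram–Schmidt, applied to `(fₙ)` itself, which is linearly independent
by the lower bound.
-/

theorem lp.hasSum_norm_sq {ι : Type*} {E : ι → Type*} [∀ i, NormedAddCommGroup (E i)]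
    (x : lp E 2) : HasSum (fun i => ‖x i‖ ^ 2) (‖x‖ ^ 2) := by
  simpa using lp.hasSum_norm (p := 2) (by norm_num) x

theorem lp.tendsto_sqrt_sum_norm_sq {ι : Type*} {E : ι → Type*} [∀ i, NormedAddCommGroup (E i)]
    (x : lp E 2) : Tendsto (fun s : Finset ι => √(∑ i ∈ s, ‖x i‖ ^ 2)) atTop (𝓝 ‖x‖) := by
  simpa using (lp.hasSum_norm_sq x).sqrt

section Synthesis

variable {ι 𝕜 E : Type*} [RCLike 𝕜] [NormedAddCommGroup E] [NormedSpace 𝕜 E] [CompleteSpace E]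
  {f : ι → E} {c C : ℝ}

theorem summable_smul_of_norm_sum_smul_le
    (hup : ∀ (s : Finset ι) (a : ι → 𝕜), ‖∑ i ∈ s, a i • f i‖ ≤ C * √(∑ i ∈ s, ‖a i‖ ^ 2))
    (x : lp (fun _ : ι => 𝕜) 2) :
    Summable fun i => x i • f i := by
  set K := max C 1
  have hK : 0 < K := lt_max_of_lt_right one_pos
  rw [summable_iff_vanishing_norm]
  intro ε hε
  obtain ⟨s, hs⟩ := summable_iff_vanishing_norm.mp (lp.hasSum_norm_sq x).summable
    ((ε / K) ^ 2) (by positivity)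
  refine ⟨s, fun t ht => ?_⟩
  have htail : √(∑ i ∈ t, ‖x i‖ ^ 2) < ε / K :=
    (Real.sqrt_lt' (by positivity)).mpr ((le_abs_self _).trans_lt (hs t ht))
  calc ‖∑ i ∈ t, x i • f i‖ ≤ C * √(∑ i ∈ t, ‖x i‖ ^ 2) := hup t x
    _ ≤ K * √(∑ i ∈ t, ‖x i‖ ^ 2) := by gcongr; exact le_max_left C 1
    _ < K * (ε / K) := by gcongr
    _ = ε := mul_div_cancel₀ ε hK.ne'


theorem norm_tsum_smul_le
    (hup : ∀ (s : Finset ι) (a : ι → 𝕜), ‖∑ i ∈ s, a i • f i‖ ≤ C * √(∑ i ∈ s, ‖a i‖ ^ 2))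
    (x : lp (fun _ : ι => 𝕜) 2) : ‖∑' i, x i • f i‖ ≤ C * ‖x‖ :=
  le_of_tendsto_of_tendsto' (summable_smul_of_norm_sum_smul_le hup x).hasSum.norm
    ((lp.tendsto_sqrt_sum_norm_sq x).const_mul C) fun s => hup s x

theorem mul_norm_le_norm_tsum_smul
    (hup : ∀ (s : Finset ι) (a : ι → 𝕜), ‖∑ i ∈ s, a i • f i‖ ≤ C * √(∑ i ∈ s, ‖a i‖ ^ 2))
    (hlow : ∀ (s : Finset ι) (a : ι → 𝕜), c * √(∑ i ∈ s, ‖a i‖ ^ 2) ≤ ‖∑ i ∈ s, a i • f i‖)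
    (x : lp (fun _ : ι => 𝕜) 2) : c * ‖x‖ ≤ ‖∑' i, x i • f i‖ :=
  le_of_tendsto_of_tendsto' ((lp.tendsto_sqrt_sum_norm_sq x).const_mul c)
    (summable_smul_of_norm_sum_smul_le hup x).hasSum.norm fun s => hlow s x

noncomputable def synthesisCLM
    (hup : ∀ (s : Finset ι) (a : ι → 𝕜), ‖∑ i ∈ s, a i • f i‖ ≤ C * √(∑ i ∈ s, ‖a i‖ ^ 2)) :
    lp (fun _ : ι => 𝕜) 2 →L[𝕜] E :=
  LinearMap.mkContinuous
    { toFun x := ∑' i, x i • f i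
      map_add' x y := by
        simp only [lp.coeFn_add, Pi.add_apply, add_smul]
        exact (summable_smul_of_norm_sum_smul_le hup x).tsum_add
          (summable_smul_of_norm_sum_smul_le hup y)
      map_smul' a x := by
        simp only [lp.coeFn_smul, Pi.smul_apply, smul_eq_mul, RingHom.id_apply, ← smul_smul]
        exact (summable_smul_of_norm_sum_smul_le hup x).tsum_const_smul a }
    C (norm_tsum_smul_le hup)

theorem synthesisCLM_apply
    (hup : ∀ (s : Finset ι) (a : ι → 𝕜), ‖∑ i ∈ s, a i • f i‖ ≤ C * √(∑ i ∈ s, ‖a i‖ ^ 2))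
    (x : lp (fun _ : ι => 𝕜) 2) : synthesisCLM hup x = ∑' i, x i • f i :=
  rfl

theorem synthesisCLM_single [DecidableEq ι]
    (hup : ∀ (s : Finset ι) (a : ι → 𝕜), ‖∑ i ∈ s, a i • f i‖ ≤ C * √(∑ i ∈ s, ‖a i‖ ^ 2))
    (i : ι) : synthesisCLM hup (lp.single 2 i 1) = f i := by
  rw [synthesisCLM_apply, tsum_eq_single i fun j hj => by simp [hj]]
  simp

theorem span_range_le_range_synthesisCLM
    (hup : ∀ (s : Finset ι) (a : ι → 𝕜), ‖∑ i ∈ s, a i • f i‖ ≤ C * √(∑ i ∈ s, ‖a i‖ ^ 2)) :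
    Submodule.span 𝕜 (Set.range f) ≤ (synthesisCLM hup).range := by
  classical
  rw [Submodule.span_le]
  rintro _ ⟨i, rfl⟩
  exact ⟨lp.single 2 i 1, synthesisCLM_single hup i⟩

theorem antilipschitzWith_synthesisCLM
    (hup : ∀ (s : Finset ι) (a : ι → 𝕜), ‖∑ i ∈ s, a i • f i‖ ≤ C * √(∑ i ∈ s, ‖a i‖ ^ 2))
    (hlow : ∀ (s : Finset ι) (a : ι → 𝕜), c * √(∑ i ∈ s, ‖a i‖ ^ 2) ≤ ‖∑ i ∈ s, a i • f i‖)
    (hc : 0 < c) : AntilipschitzWith (Real.toNNReal c)⁻¹ (synthesisCLM hup) := by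
  refine (synthesisCLM hup).antilipschitz_of_bound fun x => ?_
  rw [NNReal.coe_inv, Real.coe_toNNReal c hc.le, inv_mul_eq_div, le_div_iff₀ hc, mul_comm]
  exact mul_norm_le_norm_tsum_smul hup hlow x

theorem synthesisCLM_bijective
    (hup : ∀ (s : Finset ι) (a : ι → 𝕜), ‖∑ i ∈ s, a i • f i‖ ≤ C * √(∑ i ∈ s, ‖a i‖ ^ 2))
    (hlow : ∀ (s : Finset ι) (a : ι → 𝕜), c * √(∑ i ∈ s, ‖a i‖ ^ 2) ≤ ‖∑ i ∈ s, a i • f i‖)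
    (hc : 0 < c) (hdense : Dense (Submodule.span 𝕜 (Set.range f) : Set E)) :
    Function.Bijective (synthesisCLM hup) := by
  refine (synthesisCLM hup).bijective_iff_dense_range_and_antilipschitz.mpr
    ⟨?_, _, antilipschitzWith_synthesisCLM hup hlow hc⟩
  rw [Submodule.dense_iff_topologicalClosure_eq_top] at hdense
  exact eq_top_iff.mpr (hdense.ge.trans
    (Submodule.topologicalClosure_mono (span_range_le_range_synthesisCLM hup)))

end Synthesis

theorem linearIndependent_of_mul_sqrt_le_norm_sum_smul {ι 𝕜 E : Type*} [RCLike 𝕜]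
    [NormedAddCommGroup E] [NormedSpace 𝕜 E] {f : ι → E} {c : ℝ} (hc : 0 < c)
    (hlow : ∀ (s : Finset ι) (a : ι → 𝕜), c * √(∑ i ∈ s, ‖a i‖ ^ 2) ≤ ‖∑ i ∈ s, a i • f i‖) :
    LinearIndependent 𝕜 f := by
  rw [linearIndependent_iff']
  intro s a hsum i hi
  have hsq : ∑ j ∈ s, ‖a j‖ ^ 2 = 0 := by
    have := hlow s a
    rw [hsum, norm_zero] at this
    exact (Real.sqrt_eq_zero'.mp ((nonpos_of_mul_nonpos_right this hc).antisymm
      (Real.sqrt_nonneg _))).antisymm (by positivity)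
  simpa using (Finset.sum_eq_zero_iff_of_nonneg fun j _ => by positivity).mp hsq i hi

noncomputable def HilbertBasis.gramSchmidtNormed {ι 𝕜 E : Type*} [RCLike 𝕜]
    [NormedAddCommGroup E] [InnerProductSpace 𝕜 E] [CompleteSpace E] [LinearOrder ι]
    [LocallyFiniteOrderBot ι] [WellFoundedLT ι] {f : ι → E} (hli : LinearIndependent 𝕜 f)
    (hdense : Dense (Submodule.span 𝕜 (Set.range f) : Set E)) : HilbertBasis ι 𝕜 E :=
  HilbertBasis.mk (InnerProductSpace.gramSchmidtNormed_orthonormal hli) <| by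
    rw [InnerProductSpace.span_gramSchmidtNormed_range, InnerProductSpace.span_gramSchmidt,
      ← Submodule.dense_iff_topologicalClosure_eq_top.mp hdense]

theorem stmt13_general {H : Type*} [NormedAddCommGroup H] [InnerProductSpace ℂ H]
    [CompleteSpace H] (f : ℕ → H) (c C : ℝ) (hc : 0 < c)
    (hineq : ∀ (s : Finset ℕ) (a : ℕ → ℂ),
      c * Real.sqrt (∑ n ∈ s, ‖a n‖ ^ 2) ≤ ‖∑ n ∈ s, a n • f n‖ ∧
      ‖∑ n ∈ s, a n • f n‖ ≤ C * Real.sqrt (∑ n ∈ s, ‖a n‖ ^ 2))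
    (hcomplete : closure (Submodule.span ℂ (Set.range f) : Set H) = Set.univ) :
    ∃ (T : H ≃L[ℂ] H) (e : HilbertBasis ℕ ℂ H), ∀ n : ℕ, f n = T (e n) := by
  have hlow := fun s a => (hineq s a).1
  have hup := fun s a => (hineq s a).2
  have hdense : Dense (Submodule.span ℂ (Set.range f) : Set H) := dense_iff_closure_eq.mpr hcomplete
  obtain ⟨hinj, hsurj⟩ := synthesisCLM_bijective hup hlow hc hdense
  let S : lp (fun _ : ℕ => ℂ) 2 ≃L[ℂ] H := .ofBijective (synthesisCLM hup)
    (LinearMap.ker_eq_bot.mpr hinj) (LinearMap.range_eq_top.mpr hsurj)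
  let e := HilbertBasis.gramSchmidtNormed (linearIndependent_of_mul_sqrt_le_norm_sum_smul hc hlow)
    hdense
  refine ⟨e.repr.toContinuousLinearEquiv.trans S, e, fun n => ?_⟩
  simp [S, e.repr_self, synthesisCLM_single]

/-- A complete sequence satisfying a two-sided ℓ² inequality is the image of an
orthonormal basis under a bounded invertible operator. -/
theorem stmt13 {H : Type*} [NormedAddCommGroup H] [InnerProductSpace ℂ H]
    [CompleteSpace H] (f : ℕ → H) (c C : ℝ) (hc : 0 < c) (hcC : c ≤ C)
    (hineq : ∀ (s : Finset ℕ) (a : ℕ → ℂ),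
      c * Real.sqrt (∑ n ∈ s, ‖a n‖ ^ 2) ≤ ‖∑ n ∈ s, a n • f n‖ ∧
      ‖∑ n ∈ s, a n • f n‖ ≤ C * Real.sqrt (∑ n ∈ s, ‖a n‖ ^ 2))
    (hcomplete : closure (Submodule.span ℂ (Set.range f) : Set H) = Set.univ) :
    ∃ (T : H ≃L[ℂ] H) (e : HilbertBasis ℕ ℂ H), ∀ n : ℕ, f n = T (e n) :=
  stmt13_general f c C hc hineq hcomplete
end

section
/- Let (λ_n) be a strictly decreasing positive sequence converging to 0 such that the limit of λ_n/λ_{n+1} exists. Then λ_n/λ_{n+1} → 1 if and only if there exists δ > 1 with Card{n : t/δ ≤ λ_n ≤ t} → ∞ as t → 0⁺. -/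
open Filter Topology

private lemma aux_up (lam : ℕ → ℝ) (r : ℝ) (hr : 0 ≤ r) (M : ℕ)
    (h : ∀ n, M ≤ n → lam n ≤ r * lam (n + 1)) :
    ∀ m, M ≤ m → ∀ k, lam m ≤ r ^ k * lam (m + k) := by
  intro m hm k
  induction k with
  | zero => simp
  | succ k ih =>
    calc lam m ≤ r ^ k * lam (m + k) := ih
      _ ≤ r ^ k * (r * lam (m + k + 1)) :=
          mul_le_mul_of_nonneg_left (h _ (by omega)) (pow_nonneg hr _)
      _ = r ^ (k + 1) * lam (m + (k + 1)) := by ring_nf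

private lemma aux_down (lam : ℕ → ℝ) (r : ℝ) (hr : 0 ≤ r) (M : ℕ)
    (h : ∀ n, M ≤ n → r * lam (n + 1) ≤ lam n) :
    ∀ m, M ≤ m → ∀ k, r ^ k * lam (m + k) ≤ lam m := by
  intro m hm k
  induction k with
  | zero => simp
  | succ k ih =>
    calc r ^ (k + 1) * lam (m + (k + 1)) = r ^ k * (r * lam (m + k + 1)) := by ring_nf
      _ ≤ r ^ k * lam (m + k) :=
          mul_le_mul_of_nonneg_left (h _ (by omega)) (pow_nonneg hr _)
      _ ≤ lam m := ih

private lemma aux_finite (lam : ℕ → ℝ) (hlim : Filter.Tendsto lam Filter.atTop (nhds 0))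
    (a t : ℝ) (ha : 0 < a) : ({n : ℕ | a ≤ lam n ∧ lam n ≤ t}).Finite := by
  obtain ⟨N0, hN0⟩ := (Filter.eventually_atTop).1 (hlim.eventually_lt_const ha)
  apply Set.Finite.subset (Set.finite_Iio N0)
  intro n hn
  simp only [Set.mem_Iio]
  by_contra h
  exact absurd hn.1 (not_le.2 (hN0 n (by omega)))

/-- For a strictly decreasing positive null sequence whose ratio λ_n/λ_{n+1} has a
limit (in `[1, ∞]`), the ratio tends to 1 iff for some δ > 1 the number of terms
in `[t/δ, t]` tends to ∞ as t → 0⁺. -/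
theorem stmt16 (lam : ℕ → ℝ) (hpos : ∀ n, 0 < lam n) (hdec : StrictAnti lam)
    (hlim : Filter.Tendsto lam Filter.atTop (nhds 0))
    (L : EReal)
    (hL : Filter.Tendsto (fun n => ((lam n / lam (n + 1) : ℝ) : EReal))
      Filter.atTop (nhds L)) :
    Filter.Tendsto (fun n => lam n / lam (n + 1)) Filter.atTop (nhds 1) ↔
      ∃ δ : ℝ, 1 < δ ∧
        Filter.Tendsto (fun t : ℝ => ({n : ℕ | t / δ ≤ lam n ∧ lam n ≤ t}).ncard)
          (nhdsWithin 0 (Set.Ioi 0)) Filter.atTop := by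
  have hratio_gt : ∀ n, 1 < lam n / lam (n + 1) := fun n =>
    (one_lt_div (hpos (n + 1))).2 (hdec (Nat.lt_succ_self n))
  constructor
  · intro hrat
    refine ⟨2, one_lt_two, ?_⟩
    rw [tendsto_atTop]
    intro N
    -- work with N' = N + 1 ≥ 1
    set N' : ℕ := N + 1 with hN'
    set r : ℝ := (2 : ℝ) ^ ((N' : ℝ)⁻¹) with hrdef
    have hN'pos : (0 : ℝ) < (N' : ℝ)⁻¹ := by positivity
    have hr1 : 1 < r := Real.one_lt_rpow_iff_of_pos (by norm_num : (0:ℝ) < 2) |>.2 (Or.inl ⟨one_lt_two, hN'pos⟩)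
    have hrN : r ^ N' = 2 := by
      rw [hrdef, ← Real.rpow_natCast ((2:ℝ) ^ ((N' : ℝ)⁻¹)) N', ← Real.rpow_mul (by norm_num),
        inv_mul_cancel₀ (by positivity), Real.rpow_one]
    obtain ⟨M, hM⟩ := (Filter.eventually_atTop).1 (hrat.eventually_le_const hr1)
    have hMbound : ∀ n, M ≤ n → lam n ≤ r * lam (n + 1) := by
      intro n hn
      have := hM n hn
      rwa [div_le_iff₀ (hpos (n + 1))] at this
    filter_upwards [Ioo_mem_nhdsGT_of_mem (Set.mem_Ico.2 ⟨le_refl (0:ℝ), hpos M⟩)]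
    intro t ht
    obtain ⟨ht0, htM⟩ := ht
    have hex : ∃ n, lam n ≤ t := by
      obtain ⟨n, hn⟩ := (Filter.eventually_atTop).1 (hlim.eventually_lt_const ht0)
      exact ⟨n, (hn n le_rfl).le⟩
    set m := Nat.find hex with hmdef
    have hmt : lam m ≤ t := Nat.find_spec hex
    have hmin : ∀ j, j < m → t < lam j := fun j hj => not_le.1 (Nat.find_min hex hj)
    have hMm : M < m := by
      by_contra h
      push_neg at h
      exact absurd (hmt.trans_lt htM) (not_lt.2 (hdec.antitone h))
    have hm1 : m - 1 + 1 = m := by omega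
    -- the set contains Ico m (m + N')
    have hsub : Set.Ico m (m + N') ⊆ {n : ℕ | t / 2 ≤ lam n ∧ lam n ≤ t} := by
      intro n hn
      obtain ⟨hn1, hn2⟩ := Set.mem_Ico.1 hn
      obtain ⟨k, rfl⟩ : ∃ k, n = m + k := ⟨n - m, by omega⟩
      have hk : k < N' := by omega
      constructor
      · have h1 : lam (m - 1) ≤ r ^ (k + 1) * lam (m - 1 + (k + 1)) :=
          aux_up lam r (le_of_lt (lt_trans one_pos hr1)) M hMbound (m - 1) (by omega) (k + 1)
        have h2 : m - 1 + (k + 1) = m + k := by omega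
        rw [h2] at h1
        have h3 : t < r ^ (k + 1) * lam (m + k) := lt_of_lt_of_le (hmin (m - 1) (by omega)) h1
        have h4 : r ^ (k + 1) ≤ 2 := by
          rw [← hrN]
          exact pow_le_pow_right₀ (le_of_lt hr1) (by omega)
        have h5 : t < 2 * lam (m + k) :=
          h3.trans_le (mul_le_mul_of_nonneg_right h4 (hpos _).le)
        rw [div_le_iff₀ (by norm_num : (0:ℝ) < 2)]
        linarith [h5]
      · exact (hdec.antitone (Nat.le_add_right m k)).trans hmt
    have hfin : ({n : ℕ | t / 2 ≤ lam n ∧ lam n ≤ t}).Finite :=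
      aux_finite lam hlim _ t (by positivity)
    have hcard : N' ≤ ({n : ℕ | t / 2 ≤ lam n ∧ lam n ≤ t}).ncard := by
      have := Set.ncard_le_ncard hsub hfin
      rwa [show Set.Ico m (m + N') = ↑(Finset.Ico m (m + N')) by simp,
        Set.ncard_coe_finset, Nat.card_Ico, Nat.add_sub_cancel_left] at this
    omega
  · rintro ⟨δ, hδ, hcard⟩
    rcases lt_trichotomy L 1 with hL1 | hL1 | hL1
    · exfalso
      obtain ⟨n, hn⟩ := (hL.eventually_lt_const hL1).exists
      have : (1 : EReal) < ((lam n / lam (n + 1) : ℝ) : EReal) := by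
        rw [← EReal.coe_one, EReal.coe_lt_coe_iff]
        exact hratio_gt n
      exact absurd hn (not_lt.2 this.le)
    · rw [show (1 : EReal) = ((1 : ℝ) : EReal) from (EReal.coe_one).symm] at hL1
      rw [hL1] at hL
      exact EReal.tendsto_coe.1 hL
    · exfalso
      obtain ⟨r, hr1, hrL⟩ := EReal.exists_between_coe_real hL1
      rw [show (1 : EReal) = ((1 : ℝ) : EReal) from (EReal.coe_one).symm,
        EReal.coe_lt_coe_iff] at hr1
      obtain ⟨M, hM⟩ := (Filter.eventually_atTop).1 (hL.eventually_const_lt hrL)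
      have hMbound : ∀ n, M ≤ n → r * lam (n + 1) ≤ lam n := by
        intro n hn
        have := hM n hn
        rw [EReal.coe_lt_coe_iff] at this
        exact (le_div_iff₀ (hpos (n + 1))).1 this.le
      obtain ⟨K, hK⟩ := pow_unbounded_of_one_lt δ hr1
      -- pick t with 0 < t < lam M and ncard ≥ K + 2
      have h1 : ∀ᶠ t in nhdsWithin (0:ℝ) (Set.Ioi 0),
          K + 2 ≤ ({n : ℕ | t / δ ≤ lam n ∧ lam n ≤ t}).ncard :=
        tendsto_atTop.1 hcard (K + 2)
      have h2 : ∀ᶠ t in nhdsWithin (0:ℝ) (Set.Ioi 0), t ∈ Set.Ioo (0:ℝ) (lam M) :=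
        Filter.eventually_of_mem
          (Ioo_mem_nhdsGT_of_mem (Set.mem_Ico.2 ⟨le_refl (0:ℝ), hpos M⟩)) (fun x hx => hx)
      obtain ⟨t, hcardt, ht0, htM⟩ := (h1.and h2).exists
      have hex : ∃ n, lam n ≤ t := by
        obtain ⟨n, hn⟩ := (Filter.eventually_atTop).1 (hlim.eventually_lt_const ht0)
        exact ⟨n, (hn n le_rfl).le⟩
      set m := Nat.find hex with hmdef
      have hmt : lam m ≤ t := Nat.find_spec hex
      have hmin : ∀ j, j < m → t < lam j := fun j hj => not_le.1 (Nat.find_min hex hj)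
      have hMm : M < m := by
        by_contra h
        push_neg at h
        exact absurd (hmt.trans_lt htM) (not_lt.2 (hdec.antitone h))
      have hsub : {n : ℕ | t / δ ≤ lam n ∧ lam n ≤ t} ⊆ Set.Icc m (m + K) := by
        intro n hn
        obtain ⟨hn1, hn2⟩ := hn
        have hmn : m ≤ n := by
          by_contra h
          push_neg at h
          exact absurd hn2 (not_le.2 (hmin n h))
        refine Set.mem_Icc.2 ⟨hmn, ?_⟩
        by_contra h
        push_neg at h
        obtain ⟨k, rfl⟩ : ∃ k, n = m + k := ⟨n - m, by omega⟩
        have hkK : K ≤ k := by omega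
        have hdown : r ^ k * lam (m + k) ≤ lam m :=
          aux_down lam r (le_of_lt (lt_trans one_pos hr1)) M hMbound m (by omega) k
        have hrk : δ < r ^ k := hK.trans_le (pow_le_pow_right₀ hr1.le hkK)
        have : δ * lam (m + k) < r ^ k * lam (m + k) :=
          mul_lt_mul_of_pos_right hrk (hpos _)
        have h6 : δ * lam (m + k) < t := lt_of_lt_of_le this (hdown.trans hmt)
        rw [div_le_iff₀ (lt_trans one_pos hδ)] at hn1
        nlinarith [hpos (m + k)]
      have hfin : (Set.Icc m (m + K)).Finite := Set.finite_Icc _ _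
      have hle : ({n : ℕ | t / δ ≤ lam n ∧ lam n ≤ t}).ncard ≤ K + 1 := by
        have := Set.ncard_le_ncard hsub hfin
        rw [show Set.Icc m (m + K) = ↑(Finset.Icc m (m + K)) by simp,
          Set.ncard_coe_finset, Nat.card_Icc] at this
        omega
      omega
end
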